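/- arXiv:2507.12822 — 6 statements merged into one kernel-verified Lean document; each statement's English description precedes it below -/
import Mathlib

section
/- For any ρ ≥ 1, the function θ ↦ max{θ, ρ(1 + 1/(θ-1)), θ/2 + ρ} over θ > 1 attains its minimum value (4ρ + 1 + √(1+8ρ))/4 at θ = (1 + √(1+8ρ))/2. -/
theorem smartstart_ratio_min (ρ : ℝ) (hρ : 1 ≤ ρ) :
    let f : ℝ → ℝ := fun θ => max θ (max (ρ * (1 + 1 / (θ - 1))) (θ / 2 + ρ))
    let θstar : ℝ := (1 + Real.sqrt (1 + 8 * ρ)) / 2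
    f θstar = (4 * ρ + 1 + Real.sqrt (1 + 8 * ρ)) / 4 ∧
      ∀ θ : ℝ, 1 < θ → (4 * ρ + 1 + Real.sqrt (1 + 8 * ρ)) / 4 ≤ f θ := by
  intro f θstar
  have h8 : (0:ℝ) ≤ 1 + 8 * ρ := by linarith
  set s := Real.sqrt (1 + 8 * ρ) with hs_def
  have hs2 : s ^ 2 = 1 + 8 * ρ := Real.sq_sqrt h8
  have hs0 : 0 ≤ s := Real.sqrt_nonneg _
  have hs3 : 3 ≤ s := by nlinarith [hs2, hs0]
  have hθ : θstar = (1 + s) / 2 := rfl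
  have hθm : θstar - 1 = (s - 1) / 2 := by rw [hθ]; ring
  have hne : s - 1 ≠ 0 := by intro h; linarith [hs3]
  have hB : ρ * (1 + 1 / (θstar - 1)) = (4 * ρ + 1 + s) / 4 := by
    rw [hθm]
    have h2 : (2:ℝ) ≠ 0 := two_ne_zero
    rw [one_div_div]
    field_simp
    nlinarith [hs2]
  have hC : θstar / 2 + ρ = (4 * ρ + 1 + s) / 4 := by rw [hθ]; ring
  have hA_le : θstar ≤ (4 * ρ + 1 + s) / 4 := by
    rw [hθ]; nlinarith [hs2, hs3]
  constructor
  · show max θstar (max (ρ * (1 + 1 / (θstar - 1))) (θstar / 2 + ρ)) = _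
    rw [hB, hC, max_self, max_eq_right hA_le]
  · intro θ hθ1
    show _ ≤ max θ (max (ρ * (1 + 1 / (θ - 1))) (θ / 2 + ρ))
    by_cases hcase : θstar ≤ θ
    · have : (4 * ρ + 1 + s) / 4 ≤ θ / 2 + ρ := by rw [hθ] at hcase; linarith
      exact le_trans this (le_trans (le_max_right _ _) (le_max_right _ _))
    · push_neg at hcase
      have h1 : 1 / (θstar - 1) ≤ 1 / (θ - 1) :=
        one_div_le_one_div_of_le (by linarith) (by linarith)
      have h2 : ρ * (1 + 1 / (θstar - 1)) ≤ ρ * (1 + 1 / (θ - 1)) := by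
        apply mul_le_mul_of_nonneg_left (by linarith) (by linarith)
      rw [hB] at h2
      exact le_trans h2 (le_trans (le_max_left _ _) (le_max_right _ _))
end

section
/- Let θ = (1+√13)/2 and ρ = 3/2. For every λ with 1/θ < λ ≤ 1, one has max{λθ, ρ(1 + 1/(θ/λ - 1)), λθ/2 + ρ} = λθ/2 + ρ = 1.5 + λ(1+√13)/4. -/
/-! The waiting parameter θ = (1 + √13)/2 is the positive root of θ² = θ + 2ρ for ρ = 3/2.
With this identity, `ρ (1 + 1/(θ/λ - 1)) = ρθ/(θ - λ)` lies below `λθ/2 + ρ` by exactly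
`λθ(1 - λ)/(2(θ - λ)) ≥ 0`, and `λθ ≤ θ ≤ 2ρ` handles the first term of the maximum. -/

lemma one_add_one_div_div_sub_one {θ l : ℝ} (hl : l ≠ 0) (hθl : θ ≠ l) :
    1 + 1 / (θ / l - 1) = θ / (θ - l) := by
  have : θ - l ≠ 0 := sub_ne_zero.mpr hθl
  field_simp
  ring

lemma mul_one_add_one_div_div_sub_one_le {θ ρ l : ℝ} (hl0 : 0 < l) (hl1 : l ≤ 1) (hθ : 1 < θ)
    (hθρ : θ ^ 2 = θ + 2 * ρ) :
    ρ * (1 + 1 / (θ / l - 1)) ≤ l * θ / 2 + ρ := by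
  have hθl : l < θ := by linarith
  rw [one_add_one_div_div_sub_one hl0.ne' hθl.ne', mul_div_assoc', div_le_iff₀ (sub_pos.mpr hθl)]
  have gap : (l * θ / 2 + ρ) * (θ - l) - ρ * θ = l * θ * (1 - l) / 2 := by
    linear_combination l / 2 * hθρ
  linarith [mul_nonneg (mul_nonneg hl0.le (by linarith : (0 : ℝ) ≤ θ)) (sub_nonneg.mpr hl1)]

lemma max_eq_of_sq_eq_add {θ ρ l : ℝ} (hl0 : 0 < l) (hl1 : l ≤ 1) (hθ : 1 < θ)
    (hθρ : θ ^ 2 = θ + 2 * ρ) (hθ2ρ : θ ≤ 2 * ρ) :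
    max (l * θ) (max (ρ * (1 + 1 / (θ / l - 1))) (l * θ / 2 + ρ)) = l * θ / 2 + ρ := by
  have hlθ : l * θ ≤ l * θ / 2 + ρ := by
    linarith [mul_le_of_le_one_left (by linarith : (0 : ℝ) ≤ θ) hl1]
  rw [max_eq_right (mul_one_add_one_div_div_sub_one_le hl0 hl1 hθ hθρ), max_eq_right hlθ]

lemma one_add_sqrt_thirteen_div_two_sq :
    ((1 + Real.sqrt 13) / 2) ^ 2 = (1 + Real.sqrt 13) / 2 + 2 * (3 / 2) := by
  linear_combination (1 / 4 : ℝ) * Real.sq_sqrt (show (0 : ℝ) ≤ 13 by norm_num)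

lemma one_add_sqrt_thirteen_div_two_le_three : (1 + Real.sqrt 13) / 2 ≤ 2 * (3 / 2) := by
  have : Real.sqrt 13 ≤ 5 := Real.sqrt_le_iff.mpr ⟨by norm_num, by norm_num⟩
  linarith

theorem ssop_consistency_ratio (l : ℝ)
    (hθ : (1 + Real.sqrt 13) / 2 > 1)
    (hl1 : 1 / ((1 + Real.sqrt 13) / 2) < l) (hl2 : l ≤ 1) :
    let θ : ℝ := (1 + Real.sqrt 13) / 2
    let ρ : ℝ := 3 / 2
    max (l * θ) (max (ρ * (1 + 1 / (θ / l - 1))) (l * θ / 2 + ρ)) = l * θ / 2 + ρ ∧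
      l * θ / 2 + ρ = 1.5 + l * (1 + Real.sqrt 13) / 4 := by
  intro θ ρ
  have hl0 : 0 < l := lt_trans (by positivity) hl1
  refine ⟨max_eq_of_sq_eq_add hl0 hl2 hθ one_add_sqrt_thirteen_div_two_sq
    one_add_sqrt_thirteen_div_two_le_three, ?_⟩
  norm_num [θ, ρ]
  ring
end

section
/- Let θ = (1+√13)/2 and ρ = 3/2. For every λ with 1/θ < λ ≤ 1, one has max{θ/λ, ρ(1 + 1/(λθ - 1)), θ/(2λ) + ρ} = ρ(1 + 1/(λθ - 1)) = 1.5 + 1.5/(λ(1+√13)/2 - 1). -/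
theorem ssop_robustness_ratio (l : ℝ)
    (hl1 : 1 / ((1 + Real.sqrt 13) / 2) < l) (hl2 : l ≤ 1) :
    let θ : ℝ := (1 + Real.sqrt 13) / 2
    let ρ : ℝ := 3 / 2
    max (θ / l) (max (ρ * (1 + 1 / (l * θ - 1))) (θ / (2 * l) + ρ)) =
        ρ * (1 + 1 / (l * θ - 1)) ∧
      ρ * (1 + 1 / (l * θ - 1)) = 1.5 + 1.5 / (l * (1 + Real.sqrt 13) / 2 - 1) := by
  intro θ ρ
  have hρ : ρ = 3 / 2 := rfl
  have hs : Real.sqrt 13 ^ 2 = 13 := Real.sq_sqrt (by norm_num)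
  have hs3 : 3 < Real.sqrt 13 := by nlinarith [Real.sqrt_nonneg 13]
  have hs4 : Real.sqrt 13 < 4 := by nlinarith [Real.sqrt_nonneg 13]
  have hθpos : (0:ℝ) < θ := by simp only [θ]; linarith
  have hθ2 : θ ^ 2 = θ + 3 := by simp only [θ]; nlinarith
  have hθ3 : θ < 3 := by simp only [θ]; linarith
  have hl0 : 0 < l := lt_trans (by positivity) hl1
  have hx : 1 < l * θ := by
    have h := (div_lt_iff₀ hθpos).mp hl1
    linarith
  have hx1 : (0:ℝ) < l * θ - 1 := by linarith
  set u : ℝ := 1 / (l * θ - 1) with hu_def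
  have hu : u * (l * θ - 1) = 1 := by
    rw [hu_def]; field_simp
  have hu0 : 0 < u := by rw [hu_def]; positivity
  have eθ : θ * (u * (l * θ - 1)) = θ := by rw [hu, mul_one]
  have el : l * (u * (l * θ - 1)) = l := by rw [hu, mul_one]
  have hb_c : θ / (2 * l) + ρ ≤ ρ * (1 + u) := by
    have h1 : θ * (l * θ - 1) ≤ 3 * l := by nlinarith
    have h2 := mul_le_mul_of_nonneg_right h1 hu0.le
    rw [div_add' _ _ _ (by positivity), div_le_iff₀ (by positivity), hρ]
    linarith [h2, eθ]
  have hb_a : θ / l ≤ ρ * (1 + u) := by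
    have h1 : θ * (l * θ - 1) ≤ 3 / 2 * l * (l * θ - 1) + 3 / 2 * l := by
      nlinarith [sq_nonneg (3 * l - θ)]
    have h2 := mul_le_mul_of_nonneg_right h1 hu0.le
    rw [div_le_iff₀ hl0, hρ]
    linarith [h2, eθ, el]
  constructor
  · rw [max_eq_left hb_c, max_eq_right hb_a]
  · have h2 : l * (1 + Real.sqrt 13) / 2 - 1 = l * θ - 1 := by
      simp only [θ]; ring
    rw [h2, hρ, hu_def]
    norm_num
    ring
end

section
/- Suppose t̂_f = |R|/(θ/λ - 1) ≤ t_n, t_n = t̂_f + ε_f, |R| ≤ ρ·OPT, and θ/λ > 1. Then the completion time t_n + |R| satisfies t_n + |R| ≤ ρ(1 + 1/(θ/λ - 1))·OPT + ε_f and also t_n + |R| ≤ (θ/λ)·t_n. -/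
theorem early_start_case4 (θ ρ l R OPT tn tf εf : ℝ)
    (hOPT : 0 < OPT) (hR0 : 0 ≤ R) (hε : 0 ≤ εf)
    (hθl : 1 < θ / l) (hρ : 1 ≤ ρ)
    (htf : tf = R / (θ / l - 1))
    (hle : tf ≤ tn)
    (htn : tn = tf + εf)
    (hR : R ≤ ρ * OPT)
    (htnOPT : tn ≤ OPT) :
    tn + R ≤ ρ * (1 + 1 / (θ / l - 1)) * OPT + εf ∧ tn + R ≤ (θ / l) * tn := by
  have hx : 0 < θ / l - 1 := by linarith
  subst htn htf
  constructor
  · have h1 : R / (θ / l - 1) ≤ (ρ * OPT) / (θ / l - 1) :=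
      div_le_div_of_nonneg_right hR hx.le |>.trans_eq rfl
    have : ρ * (1 + 1 / (θ / l - 1)) * OPT = ρ * OPT + (ρ * OPT) / (θ / l - 1) := by
      rw [div_eq_mul_inv, div_eq_mul_inv]; ring
    rw [this]
    linarith
  · have : R / (θ / l - 1) = R / (θ / l - 1) := rfl
    have hkey : R ≤ (θ / l - 1) * (R / (θ / l - 1) + εf) := by
      rw [mul_add, mul_div_cancel₀ _ (ne_of_gt hx)]
      nlinarith
    nlinarith
end

section
/- Let ε > 0 and 0 ≤ h < 1/ε an integer, and suppose an algorithm starts its first schedule at time t₁ with 1 + hε ≤ t₁ < 1 + hε + ε/2, the first schedule takes time at least 2, and a deferred request at position 1 − hε − ε/2 requires a second schedule of duration at least 2(1 − hε − ε/2) starting after the first schedule ends. Then the algorithm's completion time is at least 5 − hε − ε > 4 − ε, while the offline optimum is 2. -/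
theorem lb_case2 (ε : ℝ) (hε : 0 < ε) (h : ℕ) (hh : (h : ℝ) < 1 / ε)
    (t₁ ALG OPT : ℝ)
    (ht1 : 1 + h * ε ≤ t₁) (ht2 : t₁ < 1 + h * ε + ε / 2)
    (hALG : t₁ + 2 + 2 * (1 - h * ε - ε / 2) ≤ ALG)
    (hOPT : OPT = 2) :
    5 - h * ε - ε ≤ ALG ∧ 4 - ε < ALG := by
  have hhe : (h:ℝ) * ε < 1 := by
    have := mul_lt_mul_of_pos_right hh hε
    rwa [one_div_mul_cancel hε.ne'] at this
  constructor <;> nlinarith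
end

section
/- For θ = (1+√13)/2, ρ = 3/2, and every λ ∈ (1/θ, 1], the minimum of the consistency ratio 1.5 + λ(1+√13)/4 and the robustness ratio 1.5 + 1.5/(λ(1+√13)/2 − 1) is at most (7+√13)/4, with equality exactly when λ = 1. -/
theorem ssop_min_ratio (l : ℝ)
    (hl1 : 1 / ((1 + Real.sqrt 13) / 2) < l) (hl2 : l ≤ 1) :
    min (1.5 + l * (1 + Real.sqrt 13) / 4)
        (1.5 + 1.5 / (l * (1 + Real.sqrt 13) / 2 - 1)) ≤ (7 + Real.sqrt 13) / 4 ∧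
      (min (1.5 + l * (1 + Real.sqrt 13) / 4)
          (1.5 + 1.5 / (l * (1 + Real.sqrt 13) / 2 - 1)) = (7 + Real.sqrt 13) / 4 ↔ l = 1) := by
  have hs : Real.sqrt 13 ^ 2 = 13 := Real.sq_sqrt (by norm_num)
  have hs3 : (3:ℝ) < Real.sqrt 13 := by
    nlinarith [Real.sqrt_nonneg 13]
  set s := Real.sqrt 13 with hsdef
  have hpos : (0:ℝ) < 1 + s := by linarith
  -- consistency ≤ target since l ≤ 1
  have hc : 1.5 + l * (1 + s) / 4 ≤ (7 + s) / 4 := by nlinarith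
  have hmin_le : min (1.5 + l * (1 + s) / 4) (1.5 + 1.5 / (l * (1 + s) / 2 - 1)) ≤ (7 + s) / 4 :=
    le_trans (min_le_left _ _) hc
  refine ⟨hmin_le, ?_, ?_⟩
  · intro heq
    have h1 : (7 + s) / 4 ≤ 1.5 + l * (1 + s) / 4 := heq ▸ min_le_left _ _
    nlinarith
  · rintro rfl
    have hd : (1 : ℝ) * (1 + s) / 2 - 1 = (s - 1) / 2 := by ring
    have hr : 1.5 + 1.5 / ((1:ℝ) * (1 + s) / 2 - 1) = (7 + s) / 4 := by
      rw [hd]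
      have hne : s - 1 ≠ 0 := by linarith
      field_simp
      nlinarith
    have hc1 : 1.5 + (1:ℝ) * (1 + s) / 4 = (7 + s) / 4 := by ring
    rw [hr, hc1, min_self]
end
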